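/- For every odd integer k ≥ 3, the cyclic propagator integral vanishes: I_k = ∫_{[0,1]^k} ∏_{i=0}^{k−1} (fract(t_{(i+1) mod k} − t_i) − 1/2) dt₁ ⋯ dt_k = 0. (This is the vanishing of odd wheel Feynman diagram weights in the one-loop computation of the algebraic index.) -/

import Mathlib

open MeasureTheory Real

noncomputable section

/-- The cyclic propagator integral
`I_k = ∫_{[0,1]^k} ∏_{i=0}^{k−1} (fract(t_{(i+1) mod k} − t_i) − 1/2) dt₁ ⋯ dt_k`,
where the propagator is `P(x) = fract(x) − 1/2` and the indices are taken cyclically. -/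
def cyclicPropagatorIntegral (k : ℕ) : ℝ :=
  ∫ t in Set.univ.pi (fun _ : Fin k => Set.Icc (0:ℝ) 1),
    ∏ i : Fin k,
      (Int.fract (t ⟨((i : ℕ) + 1) % k, Nat.mod_lt _ (by have := i.isLt; omega)⟩ - t i)
        - 1/2)

/-- `ζ(k) = ∑_{n=1}^{∞} n^{−k}` as a real number. -/
def zetaSum (k : ℕ) : ℝ := ∑' n : ℕ, 1 / ((n : ℝ) + 1)^k

/-!
The reflection `t ↦ 1 - t` preserves Lebesgue measure and the unit cube, and reverses every
difference `t_j - t_i`. Off the integers the propagator `P(x) = fract x - 1/2` is odd, and for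
`i ≠ j` the difference `t_j - t_i` is an integer only on a null set of hyperplanes. So the
reflection multiplies the integrand of any graph weight by `(-1)^(number of edges)`, and the
weight of a loopless graph with an odd number of edges vanishes; the `k`-wheel is such a graph
when `k` is odd and `k ≠ 1`.
-/

def propagator (x : ℝ) : ℝ := Int.fract x - 1 / 2

theorem propagator_neg {x : ℝ} (hx : x ∉ Set.range ((↑) : ℤ → ℝ)) :
    propagator (-x) = -propagator x := by
  rw [propagator, propagator, Int.fract_neg (mt Int.fract_eq_zero_iff.mp hx)]
  ring

theorem Nat.add_one_mod_ne_self {i k : ℕ} (hi : i < k) (hk : k ≠ 1) : (i + 1) % k ≠ i := by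
  rcases Nat.lt_or_ge (i + 1) k with h | h
  · rw [Nat.mod_eq_of_lt h]; omega
  · rw [show i + 1 = k by omega, Nat.mod_self]; omega

namespace MeasureTheory

theorem setIntegral_eq_zero_of_ae_comp_eq_neg {X E : Type*} [MeasurableSpace X]
    [NormedAddCommGroup E] [NormedSpace ℝ E] {μ : Measure X} {T : X → X}
    (hT : MeasurePreserving T μ μ) (hTe : MeasurableEmbedding T) {s : Set X} (hs : T ⁻¹' s = s)
    {f : X → E} (hf : ∀ᵐ x ∂μ, f (T x) = -f x) : ∫ x in s, f x ∂μ = 0 := by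
  have : IsAddTorsionFree E := .of_isTorsionFree ℝ E
  refine self_eq_neg.mp ?_
  calc ∫ x in s, f x ∂μ = ∫ x in T ⁻¹' s, f (T x) ∂μ := (hT.setIntegral_preimage_emb hTe f s).symm
    _ = ∫ x in s, -f x ∂μ := by rw [hs]; exact integral_congr_ae (ae_restrict_of_ae hf)
    _ = -∫ x in s, f x ∂μ := integral_neg f

variable {ι : Type*} [Fintype ι]

theorem volume_setOf_sub_eq_eq_zero {i j : ι} (hij : i ≠ j) (c : ℝ) :
    volume {t : ι → ℝ | t j - t i = c} = 0 := by
  classical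
  set L : (ι → ℝ) →ₗ[ℝ] ℝ := LinearMap.proj (R := ℝ) (φ := fun _ : ι => ℝ) j - LinearMap.proj i
  have hL : LinearMap.ker L ≠ ⊤ := fun h => by
    simpa [L, hij.symm] using (h ▸ Submodule.mem_top : Pi.single j (1 : ℝ) ∈ LinearMap.ker L)
  have : {t : ι → ℝ | t j - t i = c} = (fun t => -Pi.single j c + t) ⁻¹' LinearMap.ker L := by
    ext t
    simp [L, hij.symm, add_neg_eq_iff_eq_add, sub_eq_iff_eq_add', add_comm]
  rw [this, measure_preimage_add, Measure.addHaar_submodule volume _ hL]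

theorem ae_sub_notMem_range_intCast {i j : ι} (hij : i ≠ j) :
    ∀ᵐ t : ι → ℝ, t j - t i ∉ Set.range ((↑) : ℤ → ℝ) := by
  simp only [Set.mem_range, not_exists, ae_all_iff]
  exact fun n =>
    measure_mono_null (fun t ht => (not_not.mp ht).symm) (volume_setOf_sub_eq_eq_zero hij n)

theorem setIntegral_pi_Icc_prod_propagator_eq_zero {E : Type*} [Fintype E] (head tail : E → ι)
    (hloop : ∀ e, tail e ≠ head e) (hE : Odd (Fintype.card E)) :
    ∫ t in Set.univ.pi (fun _ : ι => Set.Icc (0 : ℝ) 1),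
      ∏ e, propagator (t (head e) - t (tail e)) = 0 := by
  refine setIntegral_eq_zero_of_ae_comp_eq_neg (Measure.measurePreserving_sub_left volume 1)
    (MeasurableEquiv.subLeft 1).measurableEmbedding ?_ ?_
  · ext t
    simp only [Set.mem_preimage, Set.mem_univ_pi, Pi.sub_apply, Pi.one_apply, Set.mem_Icc,
      sub_nonneg, sub_le_self_iff, and_comm]
  · filter_upwards [ae_all_iff.2 fun e => ae_sub_notMem_range_intCast (hloop e)] with t ht
    have hreflect : ∀ e, propagator ((1 - t) (head e) - (1 - t) (tail e)) =
        -propagator (t (head e) - t (tail e)) := fun e => by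
      rw [← propagator_neg (ht e)]
      congr 1
      simp only [Pi.sub_apply, Pi.one_apply]
      ring
    simp only [hreflect, Finset.prod_neg, Finset.card_univ, hE.neg_one_pow, neg_one_mul]

end MeasureTheory

/-- For every odd integer `k ≥ 3`, the cyclic propagator integral
vanishes: this is the vanishing of the odd wheel Feynman diagram weights in the one-loop
computation of the algebraic index. -/
theorem cyclicPropagatorIntegral_odd (k : ℕ) (hk : 3 ≤ k) (hko : Odd k) :
    cyclicPropagatorIntegral k = 0 := by
  unfold cyclicPropagatorIntegral
  exact setIntegral_pi_Icc_prod_propagator_eq_zero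
    (fun i : Fin k => ⟨(i + 1) % k, Nat.mod_lt _ (by omega)⟩) id
    (fun i h => Nat.add_one_mod_ne_self i.isLt (by omega) (congrArg Fin.val h).symm)
    (by simpa using hko)

end
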